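/- In the abstract 2048 model on a board with N cells, a tile with exponent N+2 (i.e., value 2^(N+2)) is NOT reachable. -/
import Mathlib


/-- Abstract 2048 model: states are multisets of exponents on a board with `N` cells. -/
inductive Reachable (N : ℕ) : Multiset ℕ → Prop
  | empty : Reachable N 0
  | insert1 {M : Multiset ℕ} : Reachable N M → Multiset.card M < N →
      Reachable N (1 ::ₘ M)
  | insert2 {M : Multiset ℕ} : Reachable N M → Multiset.card M < N →
      Reachable N (2 ::ₘ M)
  | merge {M : Multiset ℕ} {k : ℕ} : Reachable N (k ::ₘ k ::ₘ M) →
      Reachable N ((k + 1) ::ₘ M)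

private lemma card_filter_cons (j a : ℕ) (s : Multiset ℕ) :
    ((a ::ₘ s).filter (fun e => j ≤ e)).card
      = (s.filter (fun e => j ≤ e)).card + if j ≤ a then 1 else 0 := by
  rw [Multiset.filter_cons]
  split_ifs <;> simp

private lemma card_filter_mono (j j' : ℕ) (hj : j ≤ j') (s : Multiset ℕ) :
    (s.filter (fun e => j' ≤ e)).card ≤ (s.filter (fun e => j ≤ e)).card := by
  apply Multiset.card_le_card
  apply Multiset.monotone_filter_right
  intro e he
  exact le_trans hj he

private lemma card_filter_le (j : ℕ) (s : Multiset ℕ) :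
    (s.filter (fun e => j ≤ e)).card ≤ s.card :=
  Multiset.card_le_card (Multiset.filter_le _ s)

private lemma key_invariant (N : ℕ) (M : Multiset ℕ) (h : Reachable N M) :
    ∀ j, 0 < (M.filter (fun e => j ≤ e)).card →
      (M.filter (fun e => j ≤ e)).card + j ≤ N + 2 := by
  induction h with
  | empty => simp
  | @insert1 M hM hc ih =>
      intro j hpos
      rw [card_filter_cons] at hpos ⊢
      by_cases hj : j ≤ 1
      · have h1 := card_filter_le j M
        simp only [if_pos hj] at *
        omega
      · simp only [if_neg hj] at *
        exact ih j hpos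
  | @insert2 M hM hc ih =>
      intro j hpos
      rw [card_filter_cons] at hpos ⊢
      by_cases hj : j ≤ 2
      · have h1 := card_filter_le j M
        simp only [if_pos hj] at *
        omega
      · simp only [if_neg hj] at *
        exact ih j hpos
  | @merge M k hM ih =>
      intro j hpos
      rw [card_filter_cons] at hpos ⊢
      by_cases hj : j ≤ k + 1
      · by_cases hj' : j ≤ k
        · -- use ih at j
          have := ih j ?_
          · rw [card_filter_cons, card_filter_cons] at this
            simp only [if_pos hj'] at this
            simp only [if_pos hj] at *
            omega
          · rw [card_filter_cons, card_filter_cons]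
            simp only [if_pos hj']
            omega
        · -- j = k + 1; use ih at k
          have hjk : j = k + 1 := by omega
          subst hjk
          have := ih k ?_
          · rw [card_filter_cons, card_filter_cons] at this
            simp only [if_pos (le_refl k)] at this
            have hmono := card_filter_mono k (k+1) (by omega) M
            simp only [if_pos (le_refl (k+1))] at *
            omega
          · rw [card_filter_cons, card_filter_cons]
            simp only [if_pos (le_refl k)]
            omega
      · -- j > k + 1 : counts unchanged
        simp only [if_neg hj] at hpos ⊢
        have := ih j ?_
        · rw [card_filter_cons, card_filter_cons] at this
          have hk : ¬ j ≤ k := by omega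
          simp only [if_neg hk] at this
          omega
        · rw [card_filter_cons, card_filter_cons]
          have hk : ¬ j ≤ k := by omega
          simp only [if_neg hk]
          omega

/-- A tile with exponent `N + 2` is not reachable on a board with `N` cells:
every exponent in every reachable state is at most `N + 1`. -/
theorem exponent_N_add_two_not_reachable (N : ℕ) (M : Multiset ℕ)
    (h : Reachable N M) : (∀ e ∈ M, e ≤ N + 1) ∧ N + 2 ∉ M := by
  have key := key_invariant N M h
  have hbound : ∀ e ∈ M, e ≤ N + 1 := by
    intro e he
    have hpos : 0 < (M.filter (fun x => e ≤ x)).card := by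
      rw [Multiset.card_pos]
      intro h0
      have : e ∈ M.filter (fun x => e ≤ x) := by
        rw [Multiset.mem_filter]
        exact ⟨he, le_refl e⟩
      rw [h0] at this
      exact absurd this (Multiset.notMem_zero e)
    have := key e hpos
    omega
  refine ⟨hbound, fun hmem => ?_⟩
  have := hbound _ hmem
  omega
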